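/- Let R be a ring and G, K ∈ R with 1 - G*K invertible. Define the 2×2 matrix M over R with entries M₁₁ = (1-G*K)⁻¹, M₁₂ = (1-G*K)⁻¹*G, M₂₁ = (1-K*G)⁻¹*K, M₂₂ = (1-K*G)⁻¹. Then M is invertible with inverse the matrix [[1, -G],[-K, 1]]. -/
import Mathlib

lemma isUnit_one_sub_swap' {R : Type*} [Ring R] (G K : R) (h : IsUnit (1 - G * K)) :
    IsUnit (1 - K * G) := by
  obtain ⟨⟨u, v, huv, hvu⟩, hu⟩ := h
  subst hu
  have key : v - G * K * v = 1 := by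
    have := huv
    rw [sub_mul, one_mul] at this
    rwa [sub_mul, one_mul] at huv
  have key2 : v - v * (G * K) = 1 := by
    have := hvu
    rw [mul_sub, mul_one] at this
    exact this
  refine ⟨⟨1 - K * G, 1 + K * v * G, ?_, ?_⟩, rfl⟩
  · calc (1 - K*G) * (1 + K*v*G) = 1 + K*(v - G*K*v)*G - K*G := by noncomm_ring
      _ = 1 := by rw [key]; noncomm_ring
  · calc (1 + K*v*G) * (1 - K*G) = 1 + K*(v - v*(G*K))*G - K*G := by noncomm_ring
      _ = 1 := by rw [key2]; noncomm_ring

theorem closed_loop_matrix_inverse {R : Type*} [Ring R] (G K : R) (h : IsUnit (1 - G * K)) :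
    let M : Matrix (Fin 2) (Fin 2) R :=
      !![Ring.inverse (1 - G * K), Ring.inverse (1 - G * K) * G;
         Ring.inverse (1 - K * G) * K, Ring.inverse (1 - K * G)]
    let N : Matrix (Fin 2) (Fin 2) R := !![1, -G; -K, 1]
    M * N = 1 ∧ N * M = 1 ∧ IsUnit M := by
  intro M N
  have h' : IsUnit (1 - K * G) := isUnit_one_sub_swap' G K h
  set a := Ring.inverse (1 - G * K) with ha
  set b := Ring.inverse (1 - K * G) with hb
  have ha1 : (1 - G * K) * a = 1 := Ring.mul_inverse_cancel _ h
  have ha2 : a * (1 - G * K) = 1 := Ring.inverse_mul_cancel _ h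
  have hb1 : (1 - K * G) * b = 1 := Ring.mul_inverse_cancel _ h'
  have hb2 : b * (1 - K * G) = 1 := Ring.inverse_mul_cancel _ h'
  have ha1' : a - G * K * a = 1 := by rwa [sub_mul, one_mul] at ha1
  have ha2' : a - a * (G * K) = 1 := by rwa [mul_sub, mul_one] at ha2
  have hb1' : b - K * G * b = 1 := by rwa [sub_mul, one_mul] at hb1
  have hb2' : b - b * (K * G) = 1 := by rwa [mul_sub, mul_one] at hb2
  have hGb : a * G = G * b := by
    calc a * G = a * (G * ((1 - K * G) * b)) := by rw [hb1, mul_one]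
      _ = (a * (1 - G * K)) * (G * b) := by noncomm_ring
      _ = G * b := by rw [ha2, one_mul]
  have hKa : b * K = K * a := by
    calc b * K = b * (K * ((1 - G * K) * a)) := by rw [ha1, mul_one]
      _ = (b * (1 - K * G)) * (K * a) := by noncomm_ring
      _ = K * a := by rw [hb2, one_mul]
  have hMN : M * N = 1 := by
    show (!![a, a * G; b * K, b] : Matrix (Fin 2) (Fin 2) R) * !![1, -G; -K, 1] = 1
    have e1 : a * 1 + a * G * -K = 1 := by
      calc a * 1 + a * G * -K = a - a * (G * K) := by noncomm_ring
        _ = 1 := ha2'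
    have e2 : a * -G + a * G * 1 = 0 := by noncomm_ring
    have e3 : b * K * 1 + b * -K = 0 := by noncomm_ring
    have e4 : b * K * -G + b * 1 = 1 := by
      calc b * K * -G + b * 1 = b - b * (K * G) := by noncomm_ring
        _ = 1 := hb2'
    rw [Matrix.mul_fin_two, e1, e2, e3, e4, Matrix.one_fin_two]
  have hNM : N * M = 1 := by
    show (!![1, -G; -K, 1] : Matrix (Fin 2) (Fin 2) R) * !![a, a * G; b * K, b] = 1
    have e1 : 1 * a + -G * (b * K) = 1 := by
      calc 1 * a + -G * (b * K) = a - (G * b) * K := by noncomm_ring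
        _ = a - a * (G * K) := by rw [← hGb]; noncomm_ring
        _ = 1 := ha2'
    have e2 : 1 * (a * G) + -G * b = 0 := by
      calc 1 * (a * G) + -G * b = a * G - G * b := by noncomm_ring
        _ = 0 := by rw [hGb, sub_self]
    have e3 : -K * a + 1 * (b * K) = 0 := by
      calc -K * a + 1 * (b * K) = b * K - K * a := by noncomm_ring
        _ = 0 := by rw [hKa, sub_self]
    have e4 : -K * (a * G) + 1 * b = 1 := by
      calc -K * (a * G) + 1 * b = b - (K * a) * G := by noncomm_ring
        _ = b - b * (K * G) := by rw [← hKa]; noncomm_ring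
        _ = 1 := hb2'
    rw [Matrix.mul_fin_two, e1, e2, e3, e4, Matrix.one_fin_two]
  exact ⟨hMN, hNM, ⟨⟨M, N, hMN, hNM⟩, rfl⟩⟩
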